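/- Suppose (X_1,…,X_K) are n×n complex matrices and at least one X_l has n distinct eigenvalues. Then (X_1,…,X_K) is simultaneously diagonalizable if and only if rank(Ξ(X_1,…,X_K)) = n² − n. -/

import Mathlib

open Matrix Kronecker

/-- Column-stacking vectorization: `vecM X (j, i) = X i j`
(the pair `(j, i)` encodes position `(j-1)*n + i`). -/
def vecM {n : ℕ} (X : Matrix (Fin n) (Fin n) ℂ) : Fin n × Fin n → ℂ :=
  fun p => X p.2 p.1

/-- The Kronecker sum `I_n ⊗ X - Xᵀ ⊗ I_n`. -/
def kronSum {n : ℕ} (X : Matrix (Fin n) (Fin n) ℂ) :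
    Matrix (Fin n × Fin n) (Fin n × Fin n) ℂ :=
  (1 : Matrix (Fin n) (Fin n) ℂ) ⊗ₖ X - Xᵀ ⊗ₖ (1 : Matrix (Fin n) (Fin n) ℂ)

/-- `Ξ(X_1, …, X_K)`: the vertical stack of the `I_n ⊗ X_k - X_kᵀ ⊗ I_n`. -/
def XiM {n K : ℕ} (X : Fin K → Matrix (Fin n) (Fin n) ℂ) :
    Matrix (Fin K × (Fin n × Fin n)) (Fin n × Fin n) ℂ :=
  fun p q => kronSum (X p.1) p.2 q

/-- Simultaneous diagonalizability of a tuple. -/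
def SimDiag {n K : ℕ} (X : Fin K → Matrix (Fin n) (Fin n) ℂ) : Prop :=
  ∃ S : Matrix (Fin n) (Fin n) ℂ, IsUnit S ∧ ∀ k, (S⁻¹ * X k * S).IsDiag

/-- `X` has `n` distinct eigenvalues. -/
def HasDistinctEigenvalues {n : ℕ} (X : Matrix (Fin n) (Fin n) ℂ) : Prop :=
  ∃ μ : Fin n → ℂ, Function.Injective μ ∧
    ∀ i, Module.End.HasEigenvalue (Matrix.mulVecLin X) (μ i)

/-- Squared Frobenius norm. -/
noncomputable def frobSq {m p : Type*} [Fintype m] [Fintype p] (X : Matrix m p ℂ) : ℝ :=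
  ∑ i, ∑ j, ‖X i j‖ ^ 2

/-- Khatri–Rao (column-wise Kronecker) product. -/
def khatriRao {n : ℕ} (X Y : Matrix (Fin n) (Fin n) ℂ) :
    Matrix (Fin n × Fin n) (Fin n) ℂ :=
  fun p j => X p.1 j * Y p.2 j

/-!
Writing `vec` for column stacking (`Matrix.vec`, which is `vecM`), `Ξ · vec V` stacks the
`vec [X_k, V]`, so the kernel of `Ξ` is the commutant of the tuple and
`rank Ξ = n² - dim C(X₁, …, X_K)`. If `S⁻¹ X_l S = diagonal d` with `d` injective, the centralizer
of `X_l` is `S · (diagonal matrices) · S⁻¹`: it is commutative of dimension `n`. As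
`C(X₁, …, X_K) ⊆ C(X_l)`, the dimension is `n` exactly when the two agree, i.e. when every `X_k`
commutes with `X_l`, i.e. when `S` diagonalizes every `X_k`.
-/

theorem Subalgebra.mem_centralizer_singleton_iff_commute {R A : Type*} [CommSemiring R]
    [Semiring A] [Algebra R A] {a y : A} : y ∈ centralizer R {a} ↔ Commute a y := by
  simp only [mem_centralizer_iff, Set.mem_singleton_iff, forall_eq, commute_iff_eq]

theorem Subalgebra.centralizer_singleton_map {R A B : Type*} [CommSemiring R] [Semiring A]
    [Semiring B] [Algebra R A] [Algebra R B] (σ : A ≃ₐ[R] B) (a : A) :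
    (centralizer R {a}).map (σ : A →ₐ[R] B) = centralizer R {σ a} := by
  ext y
  simp only [mem_map, mem_centralizer_singleton_iff_commute]
  refine ⟨?_, fun hy => ⟨σ.symm y, ?_, σ.apply_symm_apply y⟩⟩
  · rintro ⟨x, hx, rfl⟩
    exact hx.map σ
  · simpa using hy.map σ.symm

theorem Subalgebra.finrank_centralizer_eq_iff {K A : Type*} [Field K] [Ring A] [Algebra K A]
    [FiniteDimensional K A] {s : Set A} {a : A} (ha : a ∈ s)
    (hcomm : ∀ y ∈ centralizer K {a}, ∀ z ∈ centralizer K {a}, Commute y z) :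
    Module.finrank K (centralizer K s) = Module.finrank K (centralizer K {a}) ↔
      s ⊆ centralizer K {a} := by
  have hle : centralizer K s ≤ centralizer K {a} :=
    centralizer_le K _ _ (Set.singleton_subset_iff.2 ha)
  constructor
  · intro hrank x hx
    have heq : centralizer K s = centralizer K {a} := toSubmodule_injective <|
      Submodule.eq_of_le_of_finrank_eq hle (by simpa only [finrank_toSubmodule] using hrank)
    have ha' : a ∈ centralizer K s := heq ▸ (mem_centralizer_singleton_iff_commute.2 (.refl a))
    exact mem_centralizer_singleton_iff_commute.2 ((mem_centralizer_iff K).1 ha' x hx).symm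
  · intro hs
    refine congrArg (fun S : Subalgebra K A => Module.finrank K S) (le_antisymm hle fun y hy => ?_)
    exact (mem_centralizer_iff K).2 fun x hx => (hcomm x (hs hx) y hy).eq

namespace Matrix

variable {m R : Type*} [Fintype m] [DecidableEq m]

noncomputable def conjAlgEquiv [CommRing R] {S : Matrix m m R} (hS : IsUnit S) :
    Matrix m m R ≃ₐ[R] Matrix m m R :=
  MulSemiringAction.toAlgEquiv R _ (ConjAct.toConjAct hS.unit⁻¹)

theorem conjAlgEquiv_apply [CommRing R] {S : Matrix m m R} (hS : IsUnit S) (A : Matrix m m R) :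
    conjAlgEquiv hS A = S⁻¹ * A * S := by
  simp only [conjAlgEquiv, MulSemiringAction.toAlgEquiv_apply, ConjAct.units_smul_def,
    ConjAct.ofConjAct_toConjAct, inv_inv, coe_units_inv, IsUnit.unit_spec]

theorem commute_diagonal_iff_isDiag [CommRing R] [NoZeroDivisors R] {d : m → R}
    (hd : Function.Injective d) {M : Matrix m m R} : Commute (diagonal d) M ↔ M.IsDiag := by
  refine ⟨fun h i j hij => ?_, fun h => h.diagonal_diag ▸ commute_diagonal d M.diag⟩
  have hij' : M i j * (d j - d i) = 0 := by
    have := congrFun₂ h.eq i j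
    simp only [diagonal_mul, mul_diagonal] at this
    linear_combination -this
  exact (mul_eq_zero.1 hij').resolve_right (sub_ne_zero.2 (hd.ne (Ne.symm hij)))

theorem finrank_centralizer_diagonal {K : Type*} [Field K] {d : m → K}
    (hd : Function.Injective d) :
    Module.finrank K (Subalgebra.centralizer K {diagonal d}) = Fintype.card m := by
  have hrange : Subalgebra.centralizer K {diagonal d} = (diagonalAlgHom K).range := by
    ext M
    rw [Subalgebra.mem_centralizer_singleton_iff_commute, commute_diagonal_iff_isDiag hd,
      AlgHom.mem_range]
    exact ⟨fun h => ⟨M.diag, by simpa using h.diagonal_diag⟩,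
      by rintro ⟨e, rfl⟩; exact isDiag_diagonal e⟩
  rw [hrange, ← (AlgEquiv.ofInjective _ diagonal_injective).toLinearEquiv.finrank_eq,
    Module.finrank_fintype_fun_eq_card]

section ConjugateToDiagonal

variable {K : Type*} [Field K] {A S : Matrix m m K} {d : m → K}

theorem commute_iff_isDiag_conj (hS : IsUnit S) (hd : Function.Injective d)
    (hA : S⁻¹ * A * S = diagonal d) {B : Matrix m m K} :
    Commute A B ↔ (S⁻¹ * B * S).IsDiag := by
  rw [← commute_diagonal_iff_isDiag hd, ← hA, ← conjAlgEquiv_apply hS, ← conjAlgEquiv_apply hS,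
    commute_map_iff (conjAlgEquiv hS).injective]

theorem commute_of_mem_centralizer_of_conj_eq_diagonal (hS : IsUnit S)
    (hd : Function.Injective d) (hA : S⁻¹ * A * S = diagonal d) :
    ∀ y ∈ Subalgebra.centralizer K {A}, ∀ z ∈ Subalgebra.centralizer K {A}, Commute y z := by
  intro y hy z hz
  rw [Subalgebra.mem_centralizer_singleton_iff_commute, commute_iff_isDiag_conj hS hd hA] at hy hz
  rw [← commute_map_iff (conjAlgEquiv hS).injective, conjAlgEquiv_apply, conjAlgEquiv_apply,
    ← hy.diagonal_diag, ← hz.diagonal_diag]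
  exact commute_diagonal _ _

theorem finrank_centralizer_of_conj_eq_diagonal (hS : IsUnit S) (hd : Function.Injective d)
    (hA : S⁻¹ * A * S = diagonal d) :
    Module.finrank K (Subalgebra.centralizer K {A}) = Fintype.card m := by
  rw [← finrank_centralizer_diagonal hd, ← hA, ← conjAlgEquiv_apply hS,
    ← Subalgebra.centralizer_singleton_map]
  exact ((conjAlgEquiv hS).subalgebraMap _).toLinearEquiv.finrank_eq

end ConjugateToDiagonal

theorem exists_isUnit_inv_mul_mul_eq_diagonal {K : Type*} [Field K] {A : Matrix m m K}
    {μ : m → K} (hμ : Function.Injective μ)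
    (hev : ∀ i, Module.End.HasEigenvalue A.mulVecLin (μ i)) :
    ∃ S : Matrix m m K, IsUnit S ∧ S⁻¹ * A * S = diagonal μ := by
  choose v hv using fun i => (hev i).exists_hasEigenvector
  have hS : IsUnit (of v)ᵀ := by
    rw [← linearIndependent_cols_iff_isUnit]
    exact Module.End.eigenvectors_linearIndependent' _ μ hμ v hv
  refine ⟨(of v)ᵀ, hS, ?_⟩
  have hAS : A * (of v)ᵀ = (of v)ᵀ * diagonal μ := by
    ext i j
    have := congrFun (hv j).apply_eq_smul i
    simpa [mul_apply, mulVec, dotProduct, diagonal_apply, mul_comm] using this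
  rw [Matrix.mul_assoc, hAS, ← Matrix.mul_assoc,
    nonsing_inv_mul _ ((isUnit_iff_isUnit_det _).1 hS), Matrix.one_mul]

def vecLinearEquiv (m n R : Type*) [Semiring R] : Matrix m n R ≃ₗ[R] (n × m → R) where
  toFun := vec
  invFun v := of fun i j => v (j, i)
  map_add' := vec_add
  map_smul' := vec_smul
  left_inv _ := rfl
  right_inv _ := rfl

theorem vecLinearEquiv_apply {m n R : Type*} [Semiring R] (A : Matrix m n R) :
    vecLinearEquiv m n R A = vec A :=
  rfl

end Matrix

theorem kronSum_mulVec_vec {n : ℕ} (A V : Matrix (Fin n) (Fin n) ℂ) :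
    kronSum A *ᵥ vec V = vec (A * V - V * A) := by
  rw [kronSum, sub_mulVec, kronecker_mulVec_vec, kronecker_mulVec_vec, vec_sub, transpose_one,
    transpose_transpose, Matrix.mul_one, Matrix.one_mul]

theorem XiM_mulVec_eq_zero_iff {n K : ℕ} (X : Fin K → Matrix (Fin n) (Fin n) ℂ)
    (v : Fin n × Fin n → ℂ) : XiM X *ᵥ v = 0 ↔ ∀ k, kronSum (X k) *ᵥ v = 0 :=
  ⟨fun h k => funext fun p => congrFun h (k, p), fun h => funext fun q => congrFun (h q.1) q.2⟩

theorem ker_mulVecLin_XiM {n K : ℕ} (X : Fin K → Matrix (Fin n) (Fin n) ℂ) :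
    LinearMap.ker (XiM X).mulVecLin =
      (Subalgebra.centralizer ℂ (Set.range X)).toSubmodule.map
        (vecLinearEquiv (Fin n) (Fin n) ℂ : Matrix (Fin n) (Fin n) ℂ →ₗ[ℂ] _) := by
  ext v
  obtain ⟨V, rfl⟩ := (vecLinearEquiv _ _ ℂ).surjective v
  rw [Submodule.mem_map_equiv, LinearEquiv.symm_apply_apply, Subalgebra.mem_toSubmodule,
    Subalgebra.mem_centralizer_iff, Set.forall_mem_range, LinearMap.mem_ker, mulVecLin_apply,
    XiM_mulVec_eq_zero_iff]
  refine forall_congr' fun k => ?_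
  rw [vecLinearEquiv_apply, kronSum_mulVec_vec, vec_eq_zero_iff, sub_eq_zero, eq_comm]

theorem rank_XiM_add_finrank_centralizer {n K : ℕ} (X : Fin K → Matrix (Fin n) (Fin n) ℂ) :
    (XiM X).rank + Module.finrank ℂ (Subalgebra.centralizer ℂ (Set.range X)) = n ^ 2 := by
  rw [← Subalgebra.finrank_toSubmodule, ← LinearEquiv.finrank_map_eq (vecLinearEquiv _ _ ℂ),
    ← ker_mulVecLin_XiM, rank, LinearMap.finrank_range_add_finrank_ker]
  simp [sq]

theorem SimDiag.commute {n K : ℕ} {X : Fin K → Matrix (Fin n) (Fin n) ℂ} (hX : SimDiag X)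
    (k k' : Fin K) : Commute (X k) (X k') := by
  obtain ⟨T, hT, hdiag⟩ := hX
  rw [← commute_map_iff (conjAlgEquiv hT).injective, conjAlgEquiv_apply, conjAlgEquiv_apply,
    ← (hdiag k).diagonal_diag, ← (hdiag k').diagonal_diag]
  exact commute_diagonal _ _

theorem simDiag_iff_forall_commute {n K : ℕ} {X : Fin K → Matrix (Fin n) (Fin n) ℂ} {l : Fin K}
    {S : Matrix (Fin n) (Fin n) ℂ} (hS : IsUnit S) {d : Fin n → ℂ} (hd : Function.Injective d)
    (hXl : S⁻¹ * X l * S = diagonal d) : SimDiag X ↔ ∀ k, Commute (X l) (X k) :=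
  ⟨fun hX k => hX.commute l k,
    fun h => ⟨S, hS, fun k => (commute_iff_isDiag_conj hS hd hXl).1 (h k)⟩⟩

theorem simDiag_iff_rank_eq_of_distinct_eigenvalues {n K : ℕ}
    (X : Fin K → Matrix (Fin n) (Fin n) ℂ)
    (h : ∃ l, HasDistinctEigenvalues (X l)) :
    SimDiag X ↔ (XiM X).rank = n ^ 2 - n := by
  obtain ⟨l, μ, hμ, hev⟩ := h
  obtain ⟨S, hS, hXl⟩ := exists_isUnit_inv_mul_mul_eq_diagonal hμ hev
  have hrank := rank_XiM_add_finrank_centralizer X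
  have hn : n ≤ n ^ 2 := Nat.le_self_pow two_ne_zero n
  calc SimDiag X ↔ ∀ k, Commute (X l) (X k) := simDiag_iff_forall_commute hS hμ hXl
    _ ↔ Set.range X ⊆ Subalgebra.centralizer ℂ {X l} := by
      simp only [Set.range_subset_iff, SetLike.mem_coe,
        Subalgebra.mem_centralizer_singleton_iff_commute]
    _ ↔ Module.finrank ℂ (Subalgebra.centralizer ℂ (Set.range X)) = n := by
      rw [← Subalgebra.finrank_centralizer_eq_iff (Set.mem_range_self l)
        (commute_of_mem_centralizer_of_conj_eq_diagonal hS hμ hXl),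
        finrank_centralizer_of_conj_eq_diagonal hS hμ hXl, Fintype.card_fin]
    _ ↔ (XiM X).rank = n ^ 2 - n := by omega
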